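/- Define, for integers n and λ, the polynomial P(n,λ) ∈ ℚ[z] by P(n,λ)(z) = Σ_{k=0}^{λ} φ(n, n−λ+k, k) · z^k if n ≥ λ ≥ 0, and P(n,λ) = 0 otherwise. Then for all integers n ≥ λ ≥ 0: (2n − λ·z)·P(n,λ)(z) + z(z+1)·P(n,λ)′(z) = P(n−1, λ−1)(z) + P(n−1, λ)′(z), as an identity of polynomials in z (equivalently, for all rational z). -/

import Mathlib

/-!
Comparing coefficients of `z^k`, the identity is the defining recurrence of `φ` at
`(n, n - λ + k, k)`. That recurrence in fact holds for all integers `(n, j, k)`: outside the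
triangle `0 ≤ k ≤ j ≤ n` every term vanishes, either through `φ` or through its coefficient
`n - j + 1` or `k + 1`, and at `(0, 0, 0)` the factor `2n + k` vanishes. Hence the identity holds
for all `n` and `λ`.
-/

/-- Auxiliary array realizing the triangular field `φ` on natural-number indices. -/
def phiN : ℕ → ℕ → ℕ → ℚ
  | 0, j, k => if j = 0 ∧ k = 0 then 1 else 0
  | n + 1, j, k =>
    if k ≤ j ∧ j ≤ n + 1 then
      ((if _hk : k = 0 then 0 else ((n : ℚ) + 2 - (j : ℚ)) * phiN (n + 1) (j - 1) (k - 1))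
        + ((k : ℚ) + 1) * phiN n j (k + 1) + phiN n j k) / (2 * ((n : ℚ) + 1) + (k : ℚ))
    else 0
termination_by n j k => (n, j)

/-- The triangular field `φ(n,j,k)` of rational numbers: `φ(n,j,k) = 0` unless
`0 ≤ k ≤ j ≤ n`, `φ(0,0,0) = 1`, and for `0 ≤ k ≤ j ≤ n` with `(n,j,k) ≠ (0,0,0)`,
`(2n+k)·φ(n,j,k) = (n-j+1)·φ(n,j-1,k-1) + (k+1)·φ(n-1,j,k+1) + φ(n-1,j,k)`. -/
def phi (n j k : ℤ) : ℚ :=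
  if 0 ≤ n ∧ 0 ≤ j ∧ 0 ≤ k then phiN n.toNat j.toNat k.toNat else 0

open Polynomial in
/-- The generating polynomial `P(n,λ)(z) = ∑_{k=0}^{λ} φ(n, n-λ+k, k)·z^k` for `n ≥ λ ≥ 0`,
and `P(n,λ) = 0` otherwise. -/
noncomputable def P (n l : ℤ) : Polynomial ℚ :=
  if 0 ≤ l ∧ l ≤ n then
    ∑ k ∈ Finset.range (l.toNat + 1), C (phi n (n - l + (k : ℤ)) (k : ℤ)) * X ^ k
  else 0

open Polynomial

noncomputable def diffOp {R : Type*} [CommRing R] (a b : R) (p : R[X]) : R[X] :=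
  (C a - C b * X) * p + X * (X + 1) * derivative p

section diffOp

variable {R : Type*} [CommRing R] (a b : R) (p : R[X])

theorem coeff_diffOp_zero : (diffOp a b p).coeff 0 = a * p.coeff 0 := by
  simp [diffOp, mul_add, add_mul, sub_mul, mul_assoc]

theorem coeff_diffOp_succ (m : ℕ) :
    (diffOp a b p).coeff (m + 1) = (a + (m + 1)) * p.coeff (m + 1) + (m - b) * p.coeff m := by
  rcases m with _ | m <;>
    simp [diffOp, mul_add, add_mul, sub_mul, mul_assoc, coeff_X_mul, coeff_derivative] <;> ring

end diffOp

lemma phiN_eq_zero {n j k : ℕ} (h : ¬(k ≤ j ∧ j ≤ n)) : phiN n j k = 0 := by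
  cases n with
  | zero => rw [phiN, if_neg (by omega)]
  | succ n => rw [phiN, if_neg h]

lemma phiN_succ {n j k : ℕ} (h : k ≤ j ∧ j ≤ n + 1) :
    (2 * ((n : ℚ) + 1) + k) * phiN (n + 1) j k
      = (if k = 0 then 0 else ((n : ℚ) + 2 - j) * phiN (n + 1) (j - 1) (k - 1))
        + ((k : ℚ) + 1) * phiN n j (k + 1) + phiN n j k := by
  rw [phiN, if_pos h, mul_div_cancel₀ _ (by positivity)]
  simp only [dite_eq_ite]

@[norm_cast]
lemma phi_natCast (n j k : ℕ) : phi n j k = phiN n j k := by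
  simp [phi]

lemma phi_eq_zero {n j k : ℤ} (h : ¬(0 ≤ k ∧ k ≤ j ∧ j ≤ n)) : phi n j k = 0 := by
  unfold phi
  split_ifs
  · exact phiN_eq_zero (by omega)
  · rfl

lemma phi_recurrence_of_pos {n j k : ℤ} (hn : 0 < n) (hk : 0 ≤ k) (hkj : k ≤ j) (hjn : j ≤ n) :
    (2 * n + k) * phi n j k
      = (n - j + 1) * phi n (j - 1) (k - 1) + (k + 1) * phi (n - 1) j (k + 1)
        + phi (n - 1) j k := by
  obtain ⟨N, rfl⟩ : ∃ N : ℕ, n = N + 1 := ⟨n.toNat - 1, by omega⟩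
  lift j to ℕ using (by omega)
  lift k to ℕ using hk
  have H := phiN_succ (n := N) (j := j) (k := k) (by omega)
  rcases k with _ | k
  · rw [if_pos rfl] at H
    rw [phi_eq_zero (j := j - 1) (by omega)]
    push_cast
    simp only [add_sub_cancel_right]
    norm_cast
    push_cast at H ⊢
    linear_combination H
  · rw [if_neg k.succ_ne_zero] at H
    obtain ⟨j, rfl⟩ : ∃ i : ℕ, j = i + 1 := ⟨j - 1, by omega⟩
    push_cast
    simp only [add_sub_cancel_right]
    norm_cast
    push_cast at H ⊢
    linear_combination H

theorem phi_recurrence (n j k : ℤ) :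
    (2 * n + k) * phi n j k
      = (n - j + 1) * phi n (j - 1) (k - 1) + (k + 1) * phi (n - 1) j (k + 1)
        + phi (n - 1) j k := by
  by_cases hpos : 0 < n ∧ 0 ≤ k ∧ k ≤ j ∧ j ≤ n
  · exact phi_recurrence_of_pos hpos.1 hpos.2.1 hpos.2.2.1 hpos.2.2.2
  have lhs : (2 * n + k : ℚ) * phi n j k = 0 := by
    by_cases h : 0 ≤ k ∧ k ≤ j ∧ j ≤ n
    · obtain ⟨rfl, rfl⟩ : n = 0 ∧ k = 0 := by omega
      simp
    · rw [phi_eq_zero h, mul_zero]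
  have first : (n - j + 1 : ℚ) * phi n (j - 1) (k - 1) = 0 := by
    by_cases h : j = n + 1
    · simp [h]
    · rw [phi_eq_zero (by omega), mul_zero]
  have second : (k + 1 : ℚ) * phi (n - 1) j (k + 1) = 0 := by
    by_cases h : k = -1
    · simp [h]
    · rw [phi_eq_zero (by omega), mul_zero]
  rw [lhs, first, second, phi_eq_zero (by omega)]
  ring

theorem coeff_P (n l : ℤ) (m : ℕ) : (P n l).coeff m = phi n (n - l + m) m := by
  rw [P]
  split_ifs with h
  · simp only [finsetSum_coeff, coeff_C_mul_X_pow, Finset.sum_ite_eq, Finset.mem_range]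
    split_ifs with hm
    · rfl
    · exact (phi_eq_zero (by omega)).symm
  · exact (phi_eq_zero (by omega)).symm

theorem stmt15_general (n l : ℤ) :
    (C ((2 * n : ℤ) : ℚ) - C ((l : ℤ) : ℚ) * X) * P n l
        + X * (X + 1) * derivative (P n l)
      = P (n - 1) (l - 1) + derivative (P (n - 1) l) := by
  change diffOp _ _ (P n l) = _
  ext m
  rcases m with _ | m
  · have h := phi_recurrence n (n - l) 0
    rw [coeff_diffOp_zero, coeff_add, coeff_derivative, coeff_P, coeff_P, coeff_P]
    rw [phi_eq_zero (k := 0 - 1) (by omega)] at h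
    -- `ring_nf` also normalises the integer indices of `phi`, so that they agree in `h` and the goal
    push_cast at h ⊢
    ring_nf at h ⊢
    linear_combination h
  · have h := phi_recurrence n (n - l + (m + 1)) (m + 1)
    rw [coeff_diffOp_succ, coeff_add, coeff_derivative, coeff_P, coeff_P, coeff_P, coeff_P]
    push_cast at h ⊢
    ring_nf at h ⊢
    linear_combination h

open Polynomial in
/-- The recursive differential equation
`(2n - λz)·P(n,λ)(z) + z(z+1)·P(n,λ)'(z) = P(n-1,λ-1)(z) + P(n-1,λ)'(z)` for `n ≥ λ ≥ 0`. -/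
theorem stmt15 (n l : ℤ) (h0 : 0 ≤ l) (h1 : l ≤ n) :
    (C ((2 * n : ℤ) : ℚ) - C ((l : ℤ) : ℚ) * X) * P n l
        + X * (X + 1) * derivative (P n l)
      = P (n - 1) (l - 1) + derivative (P (n - 1) l) :=
  stmt15_general n l
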